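/- Let f : ℝ → ℝ be twice differentiable and strictly increasing on some ray [x₀, ∞) with f(x) → ∞ as x → ∞ and f'(x) > 0 there, and suppose that for some constants ν > 0 and λ ∈ (0, 1) one has f''(x)/f'(x) = ν·x^{−λ}·(1 + o(1)) as x → ∞. Then, as ε → 0⁺, 2·ln((f⁻¹)'(1/ε)/ε) = (2λ/(1−λ))·ln(ln(1/ε)) + (2λ/(1−λ))·ln(1−λ) − (2/(1−λ))·ln ν + o(1). -/

import Mathlib

open Filter Set Topology

/-! Two applications of l'Hôpital's rule at `+∞` in the form `∞/∞` give
`log f'(x) ~ ν x^(1-λ) / (1-λ)`, since `(log f')' = f''/f'`, and `f(x) ~ f'(x) x^λ / ν`,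
since the derivative of `f' x^λ / ν` is `f' · (1 + o(1))`. Hence
`log (f/f') = λ log x - log ν + o(1)` and `log log f = (1-λ) log x + log ν - log (1-λ) + o(1)`,
and eliminating `log x` gives the expansion. It transfers to `f⁻¹` because at `y = 1/ε = f(x)`
we have `(f⁻¹)'(y)/ε = f(x)/f'(x)` and `log (1/ε) = log f(x)`. -/

/-- `g` is a (two-sided) inverse of `f` relative to the ray `[x₀, ∞)`. -/
def IsInverseOn (f g : ℝ → ℝ) (x₀ : ℝ) : Prop :=
  (∀ x ∈ Set.Ici x₀, g (f x) = x) ∧ (∀ y ∈ Set.Ici (f x₀), f (g y) = y)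

theorem eventually_div_lt_of_deriv_le_mul {F G F' G' : ℝ → ℝ} {m c : ℝ} (hmc : m < c)
    (hF : ∀ᶠ x in atTop, HasDerivAt F (F' x) x) (hG : ∀ᶠ x in atTop, HasDerivAt G (G' x) x)
    (hle : ∀ᶠ x in atTop, F' x ≤ m * G' x) (hGtop : Tendsto G atTop atTop) :
    ∀ᶠ x in atTop, F x / G x < c := by
  obtain ⟨X, hX⟩ := eventually_atTop.1 ((hF.and hG).and hle)
  have hderiv (x : ℝ) (hx : x ∈ Ici X) :
      HasDerivAt (fun x => m * G x - F x) (m * G' x - F' x) x :=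
    ((hX x hx).1.2.const_mul m).sub (hX x hx).1.1
  have hmono : MonotoneOn (fun x => m * G x - F x) (Ici X) :=
    monotoneOn_of_hasDerivWithinAt_nonneg (convex_Ici X)
      (fun x hx => (hderiv x hx).continuousAt.continuousWithinAt)
      (fun x hx => (hderiv x (interior_subset hx)).hasDerivWithinAt)
      (fun x hx => sub_nonneg.2 (hX x (interior_subset hx)).2)
  have hbound : Tendsto (fun x => m + (F X - m * G X) / G x) atTop (𝓝 m) := by
    simpa using tendsto_const_nhds.add (hGtop.const_div_atTop (F X - m * G X))
  filter_upwards [eventually_ge_atTop X, hGtop.eventually_gt_atTop 0,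
    hbound.eventually_lt_const hmc] with x hx hGx hlt
  have hFx : F x ≤ m * G x + (F X - m * G X) := by
    linarith [hmono self_mem_Ici hx hx]
  calc F x / G x ≤ m + (F X - m * G X) / G x := by
        rw [div_le_iff₀ hGx, add_mul, div_mul_cancel₀ _ hGx.ne']; linarith
    _ < c := hlt

theorem tendsto_div_of_tendsto_deriv_div_atTop {F G F' G' : ℝ → ℝ} {l : ℝ}
    (hF : ∀ᶠ x in atTop, HasDerivAt F (F' x) x) (hG : ∀ᶠ x in atTop, HasDerivAt G (G' x) x)
    (hG' : ∀ᶠ x in atTop, 0 < G' x) (hGtop : Tendsto G atTop atTop)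
    (hlim : Tendsto (fun x => F' x / G' x) atTop (𝓝 l)) :
    Tendsto (fun x => F x / G x) atTop (𝓝 l) := by
  refine tendsto_order.2 ⟨fun c hc => ?_, fun c hc => ?_⟩
  · obtain ⟨m, hcm, hml⟩ := exists_between hc
    have hle : ∀ᶠ x in atTop, -F' x ≤ -m * G' x := by
      filter_upwards [hlim.eventually_const_lt hml, hG'] with x hx hGx
      rw [lt_div_iff₀ hGx] at hx
      linarith
    filter_upwards [eventually_div_lt_of_deriv_le_mul (neg_lt_neg hcm)
      (hF.mono fun x h => h.neg) hG hle hGtop] with x hx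
    rw [Pi.neg_apply, neg_div] at hx
    linarith
  · obtain ⟨m, hlm, hmc⟩ := exists_between hc
    have hle : ∀ᶠ x in atTop, F' x ≤ m * G' x := by
      filter_upwards [hlim.eventually_lt_const hlm, hG'] with x hx hGx
      exact ((div_lt_iff₀ hGx).1 hx).le
    exact eventually_div_lt_of_deriv_le_mul hmc hF hG hle hGtop

theorem Real.tendsto_log_sub_log_of_tendsto_div {α : Type*} {l : Filter α} {u v : α → ℝ}
    (hu : ∀ᶠ x in l, u x ≠ 0) (hv : ∀ᶠ x in l, v x ≠ 0)
    (h : Tendsto (fun x => u x / v x) l (𝓝 1)) :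
    Tendsto (fun x => Real.log (u x) - Real.log (v x)) l (𝓝 0) := by
  have hlog := (Real.continuousAt_log one_ne_zero).tendsto.comp h
  rw [Real.log_one] at hlog
  refine hlog.congr' ?_
  filter_upwards [hu, hv] with x hux hvx
  exact Real.log_div hux hvx

theorem eventually_pos_of_tendsto_div {α : Type*} {l : Filter α} {u v : α → ℝ} {c : ℝ}
    (hc : 0 < c) (hv : ∀ᶠ x in l, 0 < v x) (h : Tendsto (fun x => u x / v x) l (𝓝 c)) :
    ∀ᶠ x in l, 0 < u x := by
  filter_upwards [h.eventually_const_lt hc, hv] with x hx hvx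
  exact (div_pos_iff_of_pos_right hvx).1 hx

section

open Real

variable {f : ℝ → ℝ} {lam ν : ℝ}

theorem tendsto_log_deriv_div_rpow (hlam : lam < 1) (hν : 0 < ν)
    (hdiff2 : ∀ᶠ x in atTop, DifferentiableAt ℝ (deriv f) x)
    (hpos : ∀ᶠ x in atTop, 0 < deriv f x)
    (hratio : Tendsto (fun x => (deriv (deriv f) x / deriv f x) / (ν * x ^ (-lam)))
      atTop (𝓝 1)) :
    Tendsto (fun x => log (deriv f x) / (ν / (1 - lam) * x ^ (1 - lam))) atTop (𝓝 1) := by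
  have hlam' : 0 < 1 - lam := sub_pos.2 hlam
  refine tendsto_div_of_tendsto_deriv_div_atTop ?_ ?_ ?_
    ((tendsto_rpow_atTop hlam').const_mul_atTop (div_pos hν hlam')) hratio
  · filter_upwards [hdiff2, hpos] with x hx hx'
    exact hx.hasDerivAt.log hx'.ne'
  · filter_upwards [eventually_gt_atTop 0] with x hx
    refine ((hasDerivAt_rpow_const (p := 1 - lam) (Or.inl hx.ne')).const_mul _).congr_deriv ?_
    rw [sub_sub_cancel_left]
    field_simp
  · filter_upwards [eventually_gt_atTop 0] with x hx
    exact mul_pos hν (rpow_pos_of_pos hx _)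

theorem tendsto_deriv_atTop (hlam : lam < 1) (hν : 0 < ν)
    (hdiff2 : ∀ᶠ x in atTop, DifferentiableAt ℝ (deriv f) x)
    (hpos : ∀ᶠ x in atTop, 0 < deriv f x)
    (hratio : Tendsto (fun x => (deriv (deriv f) x / deriv f x) / (ν * x ^ (-lam)))
      atTop (𝓝 1)) :
    Tendsto (deriv f) atTop atTop := by
  have hV : Tendsto (fun x => ν / (1 - lam) * x ^ (1 - lam)) atTop atTop :=
    (tendsto_rpow_atTop (sub_pos.2 hlam)).const_mul_atTop (div_pos hν (sub_pos.2 hlam))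
  have hlog : Tendsto (fun x => log (deriv f x)) atTop atTop := by
    refine ((tendsto_log_deriv_div_rpow hlam hν hdiff2 hpos hratio).pos_mul_atTop one_pos
      hV).congr' ?_
    filter_upwards [hV.eventually_gt_atTop 0] with x hx
    exact div_mul_cancel₀ _ hx.ne'
  refine (tendsto_exp_atTop.comp hlog).congr' ?_
  filter_upwards [hpos] with x hx
  exact exp_log hx

theorem tendsto_div_deriv_mul_rpow (hlam0 : 0 ≤ lam) (hlam1 : lam < 1) (hν : 0 < ν)
    (hdiff : ∀ᶠ x in atTop, DifferentiableAt ℝ f x)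
    (hdiff2 : ∀ᶠ x in atTop, DifferentiableAt ℝ (deriv f) x)
    (hpos : ∀ᶠ x in atTop, 0 < deriv f x)
    (hratio : Tendsto (fun x => (deriv (deriv f) x / deriv f x) / (ν * x ^ (-lam)))
      atTop (𝓝 1)) :
    Tendsto (fun x => f x / (deriv f x * x ^ lam / ν)) atTop (𝓝 1) := by
  set G' : ℝ → ℝ :=
    fun x => (deriv (deriv f) x * x ^ lam + deriv f x * (lam * x ^ (lam - 1))) / ν
  have hsmall : Tendsto (fun x : ℝ => lam * x ^ (lam - 1) / ν) atTop (𝓝 0) := by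
    have := ((tendsto_rpow_neg_atTop (sub_pos.2 hlam1)).const_mul lam).div_const ν
    simpa only [neg_sub, mul_zero, zero_div] using this
  have hquot : Tendsto (fun x => G' x / deriv f x) atTop (𝓝 1) := by
    have hsum := hratio.add hsmall
    rw [add_zero] at hsum
    refine hsum.congr' ?_
    filter_upwards [hpos, eventually_gt_atTop 0] with x hf' hx
    simp only [G', rpow_neg hx.le, rpow_sub_one hx.ne']
    field_simp
  refine tendsto_div_of_tendsto_deriv_div_atTop (hdiff.mono fun x hx => hx.hasDerivAt) ?_
    (eventually_pos_of_tendsto_div one_pos hpos hquot) ?_ ?_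
  · filter_upwards [hdiff2, eventually_gt_atTop 0] with x hx hx0
    exact (hx.hasDerivAt.mul (hasDerivAt_rpow_const (Or.inl hx0.ne'))).div_const ν
  · refine tendsto_atTop_mono' _ ?_
      ((tendsto_deriv_atTop hlam1 hν hdiff2 hpos hratio).atTop_div_const hν)
    filter_upwards [eventually_ge_atTop 1, hpos] with x hx hf'
    gcongr
    exact le_mul_of_one_le_right hf'.le (one_le_rpow hx hlam0)
  · have hinv := hquot.inv₀ one_ne_zero
    rw [inv_one] at hinv
    exact hinv.congr fun x => inv_div _ _

theorem tendsto_log_div_deriv_sub (hν : 0 < ν) (hpos : ∀ᶠ x in atTop, 0 < deriv f x)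
    (hf : ∀ᶠ x in atTop, 0 < f x)
    (h : Tendsto (fun x => f x / (deriv f x * x ^ lam / ν)) atTop (𝓝 1)) :
    Tendsto (fun x => log (f x / deriv f x) - (lam * log x - log ν)) atTop (𝓝 0) := by
  have hden : ∀ᶠ x in atTop, deriv f x * x ^ lam / ν ≠ 0 := by
    filter_upwards [hpos, eventually_gt_atTop 0] with x hf' hx
    positivity
  refine (Real.tendsto_log_sub_log_of_tendsto_div (hf.mono fun x hx => hx.ne') hden h).congr' ?_
  filter_upwards [hf, hpos, eventually_gt_atTop 0] with x hfx hf' hx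
  rw [log_div hfx.ne' hf'.ne', log_div (by positivity) hν.ne',
    log_mul hf'.ne' (rpow_pos_of_pos hx _).ne', log_rpow hx]
  ring

theorem tendsto_log_log_sub (hlam : lam < 1) (hν : 0 < ν)
    (hpos : ∀ᶠ x in atTop, 0 < deriv f x) (hf : ∀ᶠ x in atTop, 0 < f x)
    (hlogf' : Tendsto (fun x => log (deriv f x) / (ν / (1 - lam) * x ^ (1 - lam))) atTop (𝓝 1))
    (hlogff' : Tendsto (fun x => log (f x / deriv f x) - (lam * log x - log ν)) atTop (𝓝 0)) :
    Tendsto (fun x => log (log (f x)) - ((1 - lam) * log x + log ν - log (1 - lam)))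
      atTop (𝓝 0) := by
  have hlam' : 0 < 1 - lam := sub_pos.2 hlam
  set V : ℝ → ℝ := fun x => ν / (1 - lam) * x ^ (1 - lam)
  have hV : Tendsto V atTop atTop :=
    (tendsto_rpow_atTop hlam').const_mul_atTop (div_pos hν hlam')
  have hVpos : ∀ᶠ x in atTop, 0 < V x := hV.eventually_gt_atTop 0
  have hlogx : Tendsto (fun x => log x / V x) atTop (𝓝 0) := by
    have := (isLittleO_log_rpow_atTop hlam').tendsto_div_nhds_zero.div_const (ν / (1 - lam))
    rw [zero_div] at this
    exact this.congr fun x => by rw [div_div, mul_comm]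
  have hlogfV : Tendsto (fun x => log (f x) / V x) atTop (𝓝 1) := by
    have := hlogf'.add ((hlogff'.div_atTop hV).add
      ((hlogx.const_mul lam).sub (hV.const_div_atTop (log ν))))
    rw [mul_zero, sub_zero, add_zero, add_zero] at this
    refine this.congr' ?_
    filter_upwards [hf, hpos, eventually_gt_atTop 0] with x hfx hf' hx
    have hxpow : x ^ (1 - lam) ≠ 0 := (rpow_pos_of_pos hx _).ne'
    simp only [V]
    rw [log_div hfx.ne' hf'.ne']
    field_simp
    ring
  refine (Real.tendsto_log_sub_log_of_tendsto_div
    ((eventually_pos_of_tendsto_div one_pos hVpos hlogfV).mono fun x hx => hx.ne')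
    (hVpos.mono fun x hx => hx.ne') hlogfV).congr' ?_
  filter_upwards [eventually_gt_atTop 0] with x hx
  rw [log_mul (by positivity) (by positivity), log_rpow hx, log_div hν.ne' hlam'.ne']
  ring

theorem tendsto_two_log_div_deriv_sub (hlam0 : 0 ≤ lam) (hlam1 : lam < 1) (hν : 0 < ν)
    (hdiff : ∀ᶠ x in atTop, DifferentiableAt ℝ f x)
    (hdiff2 : ∀ᶠ x in atTop, DifferentiableAt ℝ (deriv f) x)
    (hpos : ∀ᶠ x in atTop, 0 < deriv f x)
    (hratio : Tendsto (fun x => (deriv (deriv f) x / deriv f x) / (ν * x ^ (-lam)))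
      atTop (𝓝 1)) :
    Tendsto (fun x => 2 * log (f x / deriv f x) -
        ((2 * lam / (1 - lam)) * log (log (f x)) + (2 * lam / (1 - lam)) * log (1 - lam) -
          (2 / (1 - lam)) * log ν)) atTop (𝓝 0) := by
  have hlam' : 1 - lam ≠ 0 := (sub_pos.2 hlam1).ne'
  have hB := tendsto_div_deriv_mul_rpow hlam0 hlam1 hν hdiff hdiff2 hpos hratio
  have hf : ∀ᶠ x in atTop, 0 < f x := by
    refine eventually_pos_of_tendsto_div one_pos ?_ hB
    filter_upwards [hpos, eventually_gt_atTop 0] with x hf' hx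
    positivity
  have hlogff' := tendsto_log_div_deriv_sub hν hpos hf hB
  have hloglogf := tendsto_log_log_sub hlam1 hν hpos hf
    (tendsto_log_deriv_div_rpow hlam1 hν hdiff2 hpos hratio) hlogff'
  have h := (hlogff'.const_mul 2).sub (hloglogf.const_mul (2 * lam / (1 - lam)))
  rw [mul_zero, mul_zero, sub_zero] at h
  refine h.congr fun x => ?_
  field_simp
  ring

end

namespace IsInverseOn

variable {f g : ℝ → ℝ} {x₀ : ℝ}

theorem mapsTo (hg : IsInverseOn f g x₀) (hcont : ContinuousOn f (Ici x₀))
    (htop : Tendsto f atTop atTop) : MapsTo g (Ici (f x₀)) (Ici x₀) := by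
  intro y hy
  obtain ⟨b, hfb, hb⟩ := ((htop.eventually_ge_atTop y).and (eventually_ge_atTop x₀)).exists
  obtain ⟨x, hx, rfl⟩ := intermediate_value_Icc hb (hcont.mono Icc_subset_Ici_self) ⟨hy, hfb⟩
  rw [hg.1 x hx.1]
  exact hx.1

theorem tendsto_atTop (hg : IsInverseOn f g x₀) (hmono : StrictMonoOn f (Ici x₀))
    (hmaps : MapsTo g (Ici (f x₀)) (Ici x₀)) : Tendsto g atTop atTop := by
  refine tendsto_atTop_atTop.2 fun b => ⟨f (max b x₀), fun y hy => ?_⟩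
  have hy₀ : f x₀ ≤ y :=
    (hmono.monotoneOn self_mem_Ici (le_max_right b x₀) (le_max_right b x₀)).trans hy
  have hgy : max b x₀ ≤ g y :=
    (hmono.le_iff_le (le_max_right b x₀) (hmaps hy₀)).1 (by rwa [hg.2 y hy₀])
  exact (le_max_left b x₀).trans hgy

theorem hasDerivAt (hg : IsInverseOn f g x₀) (hmono : StrictMonoOn f (Ici x₀))
    (hmaps : MapsTo g (Ici (f x₀)) (Ici x₀)) {y f' : ℝ} (hy : f x₀ < y)
    (hf : HasDerivAt f f' (g y)) (hf' : f' ≠ 0) : HasDerivAt g f'⁻¹ y := by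
  refine hf.of_local_left_inverse ?_ hf'
    (eventually_of_mem (Ioi_mem_nhds hy) fun z hz => hg.2 z (Ioi_subset_Ici_self hz))
  have hgmono : MonotoneOn g (Ioi (f x₀)) := fun a ha b hb hab =>
    (hmono.le_iff_le (hmaps (Ioi_subset_Ici_self ha)) (hmaps (Ioi_subset_Ici_self hb))).1
      (by rwa [hg.2 a (Ioi_subset_Ici_self ha), hg.2 b (Ioi_subset_Ici_self hb)])
  have hgy : x₀ < g y :=
    (hmaps hy.le).lt_of_ne fun h => hy.ne (by rw [h, hg.2 y hy.le])
  exact continuousAt_of_monotoneOn_of_image_mem_nhds hgmono (Ioi_mem_nhds hy)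
    (mem_of_superset (Ioi_mem_nhds hgy)
      fun x hx => ⟨f x, hmono self_mem_Ici (Ioi_subset_Ici_self hx) hx,
        hg.1 x (Ioi_subset_Ici_self hx)⟩)

end IsInverseOn

/-- If `f` is twice differentiable, strictly increasing to `∞` with positive derivative on a
ray, and `f''(x)/f'(x) = ν·x^(-lam)·(1 + o(1))` as `x → ∞` for some `ν > 0`, `lam ∈ (0,1)`,
then `2·ln((f⁻¹)'(1/ε)/ε) = (2lam/(1-lam))·ln ln(1/ε) + (2lam/(1-lam))·ln(1-lam)
− (2/(1-lam))·ln ν + o(1)` as `ε → 0⁺`. -/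
theorem log_deriv_inv_precise (f g : ℝ → ℝ) (lam ν x₀ : ℝ)
    (hlam : lam ∈ Set.Ioo (0 : ℝ) 1) (hν : 0 < ν)
    (hdiff : ∀ x ∈ Set.Ici x₀, DifferentiableAt ℝ f x)
    (hdiff2 : ∀ x ∈ Set.Ici x₀, DifferentiableAt ℝ (deriv f) x)
    (hmono : StrictMonoOn f (Set.Ici x₀))
    (htop : Tendsto f atTop atTop)
    (hpos : ∀ x ∈ Set.Ici x₀, 0 < deriv f x)
    (hratio : Tendsto (fun x : ℝ =>
        (deriv (deriv f) x / deriv f x) / (ν * x ^ (-lam))) atTop (𝓝 1))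
    (hg : IsInverseOn f g x₀) :
    Tendsto (fun ε : ℝ =>
        2 * Real.log (deriv g (1 / ε) / ε) -
          ((2 * lam / (1 - lam)) * Real.log (Real.log (1 / ε)) +
            (2 * lam / (1 - lam)) * Real.log (1 - lam) -
            (2 / (1 - lam)) * Real.log ν))
      (𝓝[>] (0 : ℝ)) (𝓝 0) := by
  have hmaps := hg.mapsTo (fun x hx => (hdiff x hx).continuousAt.continuousWithinAt) htop
  have hasymp := tendsto_two_log_div_deriv_sub hlam.1.le hlam.2 hν
    (eventually_atTop.2 ⟨x₀, hdiff⟩) (eventually_atTop.2 ⟨x₀, hdiff2⟩)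
    (eventually_atTop.2 ⟨x₀, hpos⟩) hratio
  refine (hasymp.comp ((hg.tendsto_atTop hmono hmaps).comp tendsto_inv_nhdsGT_zero)).congr' ?_
  filter_upwards [tendsto_inv_nhdsGT_zero.eventually (eventually_gt_atTop (f x₀))] with ε hε
  have hgε : x₀ ≤ g ε⁻¹ := hmaps hε.le
  rw [Function.comp_apply, Function.comp_apply, one_div,
    (hg.hasDerivAt hmono hmaps hε (hdiff _ hgε).hasDerivAt (hpos _ hgε).ne').deriv,
    hg.2 _ hε.le]
  congr 3
  rw [inv_div_left, inv_div_left, mul_comm]
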